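/- For any ξ ∈ ℍⁿ, λ > 0 and β ∈ ℝ, the generalized CR inversion satisfies Φ_{ξ,λ}^β(B_λ(ξ) ∖ {ξ}) = Σ_λ(ξ) and Φ_{ξ,λ}^β(Σ_λ(ξ)) = B_λ(ξ) ∖ {ξ}, where B_λ(ξ) = {ζ : d_H(ξ,ζ) < λ} and Σ_λ(ξ) = ℍⁿ ∖ closure(B_λ(ξ)). -/

import Mathlib

open Complex Filter Topology MeasureTheory

noncomputable section

/-- The Heisenberg group ℍⁿ as ℂⁿ × ℝ. -/
abbrev Heis (n : ℕ) := (Fin n → ℂ) × ℝ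

namespace Heis

variable {n : ℕ}

/-- Hermitian inner product ⟨z,z'⟩ = Σ_j z_j conj(z'_j). -/
def hermInner (z w : Fin n → ℂ) : ℂ := ∑ j, z j * (starRingEnd ℂ) (w j)

/-- Squared Euclidean norm |z|² = Σ_j |z_j|². -/
def nsq (z : Fin n → ℂ) : ℝ := ∑ j, Complex.normSq (z j)

/-- Group law (z,t)·(z',t') = (z+z', t+t'+2 Im⟨z,z'⟩). -/
def hmul (a b : Heis n) : Heis n :=
  (a.1 + b.1, a.2 + b.2 + 2 * (hermInner a.1 b.1).im)

/-- Group inverse: ζ⁻¹ = −ζ. -/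
def hinv (a : Heis n) : Heis n := (-a.1, -a.2)

/-- Korányi norm |(z,t)|_H = (|z|⁴ + t²)^{1/4}. -/
def korNorm (a : Heis n) : ℝ := ((nsq a.1) ^ 2 + a.2 ^ 2) ^ ((1 : ℝ)/4)

/-- Korányi distance d_H(ξ,ζ) = |ζ⁻¹·ξ|_H. -/
def dH (a b : Heis n) : ℝ := korNorm (hmul (hinv b) a)

/-- Open Korányi ball B_λ(ξ). -/
def ball (ξ : Heis n) (lam : ℝ) : Set (Heis n) := {ζ | dH ξ ζ < lam}

/-- Left translation τ_ξ. -/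
def tau (ξ ζ : Heis n) : Heis n := hmul ξ ζ

/-- Dilation δ_λ(z,t) = (λz, λ²t). -/
def dil (lam : ℝ) (a : Heis n) : Heis n := (fun j => (lam : ℂ) * a.1 j, lam ^ 2 * a.2)

/-- Rotation ρ_M(z,t) = (Mz,t). -/
def rot (M : Matrix (Fin n) (Fin n) ℂ) (a : Heis n) : Heis n := (M.mulVec a.1, a.2)

/-- Inversion ι(z,t) = (conj z, −t). -/
def iota (a : Heis n) : Heis n := (fun j => (starRingEnd ℂ) (a.1 j), -a.2)

/-- w = t + i|z|². -/
def wC (a : Heis n) : ℂ := (a.2 : ℂ) + Complex.I * ((nsq a.1 : ℝ) : ℂ)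

/-- CR inversion 𝒥(z,t) = (z/w, −t/|w|²). -/
def crInv (a : Heis n) : Heis n :=
  (fun j => a.1 j / wC a, -a.2 / Complex.normSq (wC a))

/-- Angles θ_k for the rotation matrix M_{ξ,β}. -/
def theta (ξ : Heis n) (β : ℝ) (k : Fin n) : ℝ :=
  if ξ.1 k ≠ 0 then 2 * (ξ.1 k).arg + (wC ξ + Complex.I * (β : ℂ)).arg else 0

/-- The unitary diagonal matrix M_{ξ,β} = diag(e^{iθ₁},…,e^{iθₙ}). -/
def Mmat (ξ : Heis n) (β : ℝ) : Matrix (Fin n) (Fin n) ℂ :=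
  Matrix.diagonal fun k => Complex.exp (Complex.I * ((theta ξ β k : ℝ) : ℂ))

/-- Generalized CR inversion Φ_{ξ,λ}^β = τ_ξ ∘ ρ_{M_{ξ,β}} ∘ δ_{λ²} ∘ 𝒥 ∘ ι ∘ τ_ξ⁻¹. -/
def Phi (ξ : Heis n) (lam β : ℝ) (ζ : Heis n) : Heis n :=
  tau ξ (rot (Mmat ξ β) (dil (lam ^ 2) (crInv (iota (hmul (hinv ξ) ζ)))))

/-- Direction of the vector field X_j at p. -/
def XVec (j : Fin n) (p : Heis n) : Heis n := (Pi.single j (1 : ℂ), 2 * (p.1 j).im)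

/-- Direction of the vector field Y_j at p. -/
def YVec (j : Fin n) (p : Heis n) : Heis n := (Pi.single j Complex.I, -2 * (p.1 j).re)

/-- The vector field X_j acting on functions. -/
def Xop (j : Fin n) (u : Heis n → ℝ) (p : Heis n) : ℝ := fderiv ℝ u p (XVec j p)

/-- The vector field Y_j acting on functions. -/
def Yop (j : Fin n) (u : Heis n → ℝ) (p : Heis n) : ℝ := fderiv ℝ u p (YVec j p)

/-- Sub-Laplacian Δ_H = Σ_j (X_j² + Y_j²). -/
def subLap (u : Heis n → ℝ) (p : Heis n) : ℝ :=
  ∑ j, (Xop j (Xop j u) p + Yop j (Yop j u) p)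

/-- Squared length of the horizontal gradient |∇_H u|² = Σ_j ((X_j u)² + (Y_j u)²). -/
def gradHSq (u : Heis n → ℝ) (p : Heis n) : ℝ :=
  ∑ j, ((Xop j u p) ^ 2 + (Yop j u p) ^ 2)

/-- Generalized Kelvin transform u_{ξ,λ}^β(η) = (λ/d_H(η,ξ))^{Q−2} u(Φ_{ξ,λ}^β(η)), Q−2 = 2n. -/
def kelvin (u : Heis n → ℝ) (ξ : Heis n) (lam β : ℝ) (η : Heis n) : ℝ :=
  (lam / dH η ξ) ^ (2 * n) * u (Phi ξ lam β η)

/-- The filter |ζ|_H → ∞ on ℍⁿ. -/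
def atInftyH (n : ℕ) : Filter (Heis n) := Filter.comap korNorm Filter.atTop

end Heis

/-!
Write `Φ = τ_ξ ∘ Ψ ∘ τ_ξ⁻¹` with `Ψ = ρ_M ∘ δ_{λ²} ∘ 𝒥 ∘ ι`. In the coordinate `w = t + i|z|²` the
Korányi norm is `|w|^{1/2}`, and `Ψ` acts by `w ↦ λ⁴ / w̄`, so `d_H(ξ, Φ ζ) = λ² / d_H(ξ, ζ)`;
moreover `Ψ` conjugates `z` and turns it by a unimodular diagonal matrix, and two such steps
cancel, so `Φ` is an involution. Hence `Φ` exchanges `{0 < d_H(ξ, ·) < λ}` and `{d_H(ξ, ·) > λ}`,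
and the latter is the complement of the closure of the ball because the dilations centred at `ξ`
scale `d_H(ξ, ·)`.
-/

open ComplexConjugate

theorem Function.Involutive.image_eq_of_mapsTo {α : Type*} {f : α → α} (hf : Involutive f)
    {s t : Set α} (hst : Set.MapsTo f s t) (hts : Set.MapsTo f t s) : f '' s = t :=
  (Set.InvOn.bijOn ⟨fun x _ => hf x, fun x _ => hf x⟩ hst hts).image_eq

theorem closure_setOf_lt_eq_of_homogeneous {X : Type*} [TopologicalSpace X] {f : X → ℝ}
    (hf : Continuous f) (δ : ℝ → X → X) (hδ : ∀ x, ContinuousAt (fun s => δ s x) 1)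
    (hδ_one : ∀ x, δ 1 x = x) (hfδ : ∀ x {s}, 0 ≤ s → f (δ s x) = s * f x) {c : ℝ}
    (hc : 0 < c) : closure {x | f x < c} = {x | f x ≤ c} := by
  refine (closure_lt_subset_le hf continuous_const).antisymm fun x hx => ?_
  have htend : Tendsto (fun s => δ s x) (𝓝[<] 1) (𝓝 x) := by
    simpa only [hδ_one] using (hδ x).tendsto.mono_left nhdsWithin_le_nhds
  refine mem_closure_of_tendsto htend ?_
  filter_upwards [Ioo_mem_nhdsLT zero_lt_one] with s hs
  rw [hfδ x hs.1.le]
  calc s * f x ≤ s * c := mul_le_mul_of_nonneg_left hx hs.1.le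
    _ < c := by nlinarith [hs.2]

namespace Heis

variable {n : ℕ}

section Group

lemma hermInner_add_right (z x y : Fin n → ℂ) :
    hermInner z (x + y) = hermInner z x + hermInner z y := by
  simp [hermInner, mul_add, Finset.sum_add_distrib]

lemma hermInner_neg_left (z w : Fin n → ℂ) : hermInner (-z) w = -hermInner z w := by
  simp [hermInner]

lemma hermInner_neg_right (z w : Fin n → ℂ) : hermInner z (-w) = -hermInner z w := by
  simp [hermInner]

lemma im_hermInner_self (z : Fin n → ℂ) : (hermInner z z).im = 0 := by
  simp [hermInner, Complex.mul_conj, Complex.im_sum]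

lemma im_hermInner_comm (z w : Fin n → ℂ) : (hermInner w z).im = -(hermInner z w).im := by
  simp only [hermInner, Complex.im_sum, ← Finset.sum_neg_distrib]
  congr 1 with j
  simp; ring

lemma hmul_zero (a : Heis n) : hmul a 0 = a := by
  simp [hmul, hermInner]

lemma hinv_hmul_self (a : Heis n) : hmul (hinv a) a = 0 := by
  ext <;> simp [hmul, hinv, hermInner_neg_left, im_hermInner_self]

lemma hinv_hmul_cancel_left (a b : Heis n) : hmul (hinv a) (hmul a b) = b := by
  ext <;> simp [hmul, hinv, hermInner_neg_left, hermInner_add_right, im_hermInner_self]; ring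

lemma hmul_hinv_cancel_left (a b : Heis n) : hmul a (hmul (hinv a) b) = b := by
  ext <;> simp [hmul, hinv, hermInner_neg_left, hermInner_neg_right, hermInner_add_right,
    im_hermInner_self]; ring

lemma hinv_hinv (a : Heis n) : hinv (hinv a) = a := by
  simp [hinv]

lemma hinv_hmul (a b : Heis n) : hinv (hmul a b) = hmul (hinv b) (hinv a) := by
  ext <;> simp [hmul, hinv, hermInner_neg_left, hermInner_neg_right, im_hermInner_comm a.1]; ring

end Group

section Norm

lemma nsq_eq_zero_iff {z : Fin n → ℂ} : nsq z = 0 ↔ z = 0 := by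
  simp [nsq, Finset.sum_eq_zero_iff_of_nonneg, Complex.normSq_nonneg, funext_iff]

lemma normSq_wC (a : Heis n) : Complex.normSq (wC a) = nsq a.1 ^ 2 + a.2 ^ 2 := by
  simp [wC, Complex.normSq_apply]; ring

lemma wC_eq_zero_iff {a : Heis n} : wC a = 0 ↔ a = 0 := by
  rw [← Complex.normSq_eq_zero, normSq_wC, Prod.ext_iff, Prod.fst_zero, Prod.snd_zero,
    ← nsq_eq_zero_iff]
  constructor
  · intro h
    constructor <;> nlinarith [sq_nonneg (nsq a.1), sq_nonneg a.2]
  · rintro ⟨h1, h2⟩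
    simp [h1, h2]

lemma korNorm_eq_sqrt_norm_wC (a : Heis n) : korNorm a = √‖wC a‖ := by
  rw [korNorm, ← normSq_wC, Complex.normSq_eq_norm_sq, Real.sqrt_eq_rpow,
    ← Real.rpow_natCast, ← Real.rpow_mul (norm_nonneg _)]
  norm_num

lemma korNorm_eq_zero_iff {a : Heis n} : korNorm a = 0 ↔ a = 0 := by
  rw [korNorm_eq_sqrt_norm_wC, Real.sqrt_eq_zero (norm_nonneg _), norm_eq_zero, wC_eq_zero_iff]

lemma korNorm_hinv (a : Heis n) : korNorm (hinv a) = korNorm a := by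
  simp [korNorm, hinv, nsq]

lemma wC_dil (s : ℝ) (a : Heis n) : wC (dil s a) = (s : ℂ) ^ 2 * wC a := by
  simp [wC, dil, nsq, Complex.normSq_mul, ← Finset.mul_sum]; ring

lemma korNorm_dil {s : ℝ} (hs : 0 ≤ s) (a : Heis n) : korNorm (dil s a) = s * korNorm a := by
  rw [korNorm_eq_sqrt_norm_wC, korNorm_eq_sqrt_norm_wC, wC_dil, norm_mul, norm_pow,
    Complex.norm_real, Real.norm_eq_abs, sq_abs, Real.sqrt_mul (sq_nonneg s), Real.sqrt_sq hs]

lemma dH_comm (a b : Heis n) : dH a b = dH b a := by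
  rw [dH, ← korNorm_hinv, hinv_hmul, hinv_hinv, dH]

lemma dH_eq_korNorm (ξ ζ : Heis n) : dH ξ ζ = korNorm (hmul (hinv ξ) ζ) := by
  rw [dH_comm, dH]

lemma dH_nonneg (ξ ζ : Heis n) : 0 ≤ dH ξ ζ := by
  rw [dH, korNorm_eq_sqrt_norm_wC]
  positivity

lemma dH_eq_zero_iff {ξ ζ : Heis n} : dH ξ ζ = 0 ↔ ζ = ξ := by
  rw [dH_eq_korNorm, korNorm_eq_zero_iff]
  constructor
  · intro h
    rw [← hmul_hinv_cancel_left ξ ζ, h, hmul_zero]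
  · intro h
    rw [h, hinv_hmul_self]

lemma dH_hmul (ξ b : Heis n) : dH ξ (hmul ξ b) = korNorm b := by
  rw [dH_eq_korNorm, hinv_hmul_cancel_left]

lemma ball_diff_singleton (ξ : Heis n) (lam : ℝ) :
    ball ξ lam \ {ξ} = {ζ | 0 < dH ξ ζ ∧ dH ξ ζ < lam} := by
  ext ζ
  simp [ball, ← dH_eq_zero_iff, (dH_nonneg ξ ζ).lt_iff_ne', and_comm]

end Norm

section Topology

lemma continuous_korNorm : Continuous (korNorm : Heis n → ℝ) := by
  have : Continuous (wC : Heis n → ℂ) := by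
    unfold wC nsq; fun_prop
  rw [show (korNorm : Heis n → ℝ) = fun a => √‖wC a‖ from funext korNorm_eq_sqrt_norm_wC]
  exact this.norm.sqrt

lemma continuous_hmul (a : Heis n) : Continuous (hmul a) := by
  unfold hmul hermInner; fun_prop

lemma continuous_dH (ξ : Heis n) : Continuous (dH ξ) := by
  rw [show dH ξ = korNorm ∘ hmul (hinv ξ) from funext (dH_eq_korNorm ξ)]
  exact continuous_korNorm.comp (continuous_hmul (hinv ξ))

lemma closure_ball (ξ : Heis n) {lam : ℝ} (hlam : 0 < lam) :
    closure (ball ξ lam) = {ζ | dH ξ ζ ≤ lam} := by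
  refine closure_setOf_lt_eq_of_homogeneous (continuous_dH ξ)
    (fun s ζ => hmul ξ (dil s (hmul (hinv ξ) ζ))) (fun ζ => ?_) (fun ζ => ?_)
    (fun ζ s hs => ?_) hlam
  · exact ((continuous_hmul ξ).comp (by unfold dil; fun_prop)).continuousAt
  · simp [dil, hmul_hinv_cancel_left]
  · rw [dH_hmul, korNorm_dil hs, dH_eq_korNorm]

lemma compl_closure_ball (ξ : Heis n) {lam : ℝ} (hlam : 0 < lam) :
    (closure (ball ξ lam))ᶜ = {ζ | lam < dH ξ ζ} := by
  ext ζ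
  simp [closure_ball ξ hlam]

end Topology

def centredInversion (e : Fin n → ℂ) (μ : ℝ) (a : Heis n) : Heis n :=
  rot (Matrix.diagonal e) (dil μ (crInv (iota a)))

lemma wC_iota (a : Heis n) : wC (iota a) = -conj (wC a) := by
  simp [wC, iota, nsq, Complex.ext_iff]

section CentredInversion

variable {e : Fin n → ℂ} {μ : ℝ}

lemma centredInversion_fst (a : Heis n) (k : Fin n) :
    (centredInversion e μ a).1 k = -(μ * e k * conj (a.1 k) / conj (wC a)) := by
  simp only [centredInversion, rot, dil, crInv, Matrix.mulVec_diagonal, wC_iota]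
  simp [iota]
  ring

lemma centredInversion_snd (a : Heis n) :
    (centredInversion e μ a).2 = μ ^ 2 * a.2 / Complex.normSq (wC a) := by
  simp only [centredInversion, rot, dil, crInv, wC_iota]
  simp [iota]
  ring

lemma nsq_centredInversion (he : ∀ k, ‖e k‖ = 1) (a : Heis n) :
    nsq (centredInversion e μ a).1 = μ ^ 2 * nsq a.1 / Complex.normSq (wC a) := by
  simp only [nsq, centredInversion_fst, Complex.normSq_eq_norm_sq]
  simp only [he, norm_neg, norm_div, norm_mul, Complex.norm_conj, Complex.norm_real,
    Real.norm_eq_abs, Finset.mul_sum, Finset.sum_div]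
  congr 1 with k
  rw [← sq_abs μ]
  ring

lemma wC_centredInversion (he : ∀ k, ‖e k‖ = 1) (a : Heis n) :
    wC (centredInversion e μ a) = μ ^ 2 * (conj (wC a))⁻¹ := by
  rw [Complex.inv_def, Complex.conj_conj, Complex.normSq_conj, wC, centredInversion_snd,
    nsq_centredInversion he, wC]
  push_cast
  ring

lemma korNorm_centredInversion (he : ∀ k, ‖e k‖ = 1) (a : Heis n) :
    korNorm (centredInversion e μ a) = |μ| / korNorm a := by
  rw [korNorm_eq_sqrt_norm_wC, korNorm_eq_sqrt_norm_wC, wC_centredInversion he, norm_mul,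
    norm_inv, Complex.norm_conj, norm_pow, Complex.norm_real, Real.norm_eq_abs, ← div_eq_mul_inv,
    Real.sqrt_div' _ (norm_nonneg _), sq_abs, Real.sqrt_sq_eq_abs]

lemma centredInversion_involutive (he : ∀ k, ‖e k‖ = 1) (hμ : μ ≠ 0) :
    Function.Involutive (centredInversion e μ) := by
  intro a
  rcases eq_or_ne (wC a) 0 with hw | hw
  · obtain rfl := wC_eq_zero_iff.mp hw
    ext k <;> simp [centredInversion_fst, centredInversion_snd, wC_centredInversion he, hw]
  have hunit : ∀ k, e k * conj (e k) = 1 := fun k => by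
    rw [Complex.mul_conj', he]; norm_num
  ext k
  · rw [centredInversion_fst, centredInversion_fst, wC_centredInversion he]
    simp only [map_neg, map_div₀, map_mul, Complex.conj_conj, Complex.conj_ofReal, map_inv₀,
      map_pow]
    field_simp [Complex.ofReal_ne_zero.mpr hμ]
    linear_combination a.1 k * hunit k
  · rw [centredInversion_snd, centredInversion_snd, wC_centredInversion he,
      Complex.normSq_mul, Complex.normSq_inv, Complex.normSq_conj, map_pow, Complex.normSq_ofReal]
    field_simp [Complex.normSq_eq_zero.not.mpr hw]

end CentredInversion

lemma Phi_eq_hmul_centredInversion (ξ : Heis n) (lam β : ℝ) (ζ : Heis n) :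
    Phi ξ lam β ζ = hmul ξ (centredInversion (fun k => exp (I * (theta ξ β k : ℂ))) (lam ^ 2)
      (hmul (hinv ξ) ζ)) :=
  rfl

-- At `ζ = ξ` both sides vanish, by the convention `x / 0 = 0` (also inside `𝒥`).
lemma dH_Phi (ξ : Heis n) (lam β : ℝ) (ζ : Heis n) :
    dH ξ (Phi ξ lam β ζ) = lam ^ 2 / dH ξ ζ := by
  rw [Phi_eq_hmul_centredInversion, dH_hmul,
    korNorm_centredInversion (fun k => norm_exp_I_mul_ofReal _), abs_sq, dH_eq_korNorm]

lemma Phi_involutive (ξ : Heis n) {lam : ℝ} (hlam : lam ≠ 0) (β : ℝ) :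
    Function.Involutive (Phi ξ lam β) := fun ζ => by
  rw [Phi_eq_hmul_centredInversion, Phi_eq_hmul_centredInversion, hinv_hmul_cancel_left,
    centredInversion_involutive (fun k => norm_exp_I_mul_ofReal _) (pow_ne_zero 2 hlam),
    hmul_hinv_cancel_left]

end Heis

open Heis

/-- Φ_{ξ,λ}^β maps B_λ(ξ)∖{ξ} onto Σ_λ(ξ) and vice versa. -/
theorem phi_maps_ball_to_exterior (n : ℕ) (ξ : Heis n) (lam : ℝ) (hlam : 0 < lam) (β : ℝ) :
    Phi ξ lam β '' (ball ξ lam \ {ξ}) = (closure (ball ξ lam))ᶜ ∧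
    Phi ξ lam β '' (closure (ball ξ lam))ᶜ = ball ξ lam \ {ξ} := by
  rw [compl_closure_ball ξ hlam, ball_diff_singleton]
  have hin : Set.MapsTo (Phi ξ lam β) {ζ | 0 < dH ξ ζ ∧ dH ξ ζ < lam} {ζ | lam < dH ξ ζ} := by
    rintro ζ ⟨hpos, hlt⟩
    change lam < dH ξ (Phi ξ lam β ζ)
    rw [dH_Phi, lt_div_iff₀ hpos]
    nlinarith
  have hout : Set.MapsTo (Phi ξ lam β) {ζ | lam < dH ξ ζ} {ζ | 0 < dH ξ ζ ∧ dH ξ ζ < lam} := by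
    intro ζ (hgt : lam < dH ξ ζ)
    have hpos : 0 < dH ξ ζ := hlam.trans hgt
    change 0 < dH ξ (Phi ξ lam β ζ) ∧ dH ξ (Phi ξ lam β ζ) < lam
    rw [dH_Phi, div_lt_iff₀ hpos]
    exact ⟨by positivity, by nlinarith⟩
  have hinv := Phi_involutive ξ hlam.ne' β
  exact ⟨hinv.image_eq_of_mapsTo hin hout, hinv.image_eq_of_mapsTo hout hin⟩
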